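/- arXiv:2604.20412 — 3 statements merged into one kernel-verified Lean document; each statement's English description precedes it below -/
import Mathlib

section
/- Let A be a Poisson algebra with a weight-0 Rota–Baxter operator R. With x∘y = R(x)·y and x*y = [R(x),y], the identity (x*y - y*x)∘z = x*(y∘z) - y∘(x*z) holds for all x,y,z ∈ A. -/
theorem stmt_9 (F : Type*) [Field F] (A : Type*) [AddCommGroup A] [Module F A]
    (mul lie : A →ₗ[F] A →ₗ[F] A)
    (hcomm : ∀ a b : A, mul a b = mul b a)
    (hassoc : ∀ a b c : A, mul (mul a b) c = mul a (mul b c))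
    (hanti : ∀ a b : A, lie a b = - lie b a)
    (hjac : ∀ a b c : A, lie (lie a b) c + lie (lie b c) a + lie (lie c a) b = 0)
    (hleib : ∀ a b c : A, lie a (mul b c) = mul (lie a b) c + mul b (lie a c))
    (R : A →ₗ[F] A)
    (hRBmul : ∀ x y : A, mul (R x) (R y) = R (mul (R x) y + mul x (R y)))
    (hRBlie : ∀ x y : A, lie (R x) (R y) = R (lie (R x) y + lie x (R y))) :
    ∀ x y z : A,
      mul (R (lie (R x) y - lie (R y) x)) z
        = lie (R x) (mul (R y) z) - mul (R y) (lie (R x) z) := by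
  intro x y z
  have h1 : lie (R x) y - lie (R y) x = lie (R x) y + lie x (R y) := by
    rw [hanti (R y) x]; abel
  rw [h1, ← hRBlie, hleib]
  abel
end

section
/- Let (A,⊥,[,]) be a Poisson algebra with a Nijenhuis operator N, i.e. N(x)⊥N(y) = N(N(x)⊥y + x⊥N(y) - N(x⊥y)) and [N(x),N(y)] = N([N(x),y] + [x,N(y)] - N([x,y])). Define a∘b = N(a)⊥b, a∨b = -N(a⊥b), a·b = [N(a),b], a∧b = -N([a,b]). Then (A,·,∧,∘,∨) is an NS-Poisson algebra. -/
variable {F : Type*} [Field F] {A : Type*} [AddCommGroup A] [Module F A]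

/-- The derived bracket `a⋆b = a·b - b·a + a∧b` of an NS-Lie structure. -/
def nsStar (cdot wedge : A →ₗ[F] A →ₗ[F] A) (a b : A) : A :=
  cdot a b - cdot b a + wedge a b

/-- The derived product `a*b = a∘b + b∘a + a∨b` of an NS-commutative structure. -/
def nsAst (circ vee : A →ₗ[F] A →ₗ[F] A) (a b : A) : A :=
  circ a b + circ b a + vee a b

/-- The defining identities of an NS-Poisson algebra `(A,·,∧,∘,∨)`. -/
def IsNSPoisson (cdot wedge circ vee : A →ₗ[F] A →ₗ[F] A) : Prop :=
  (∀ a b : A, vee a b = vee b a) ∧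
  (∀ a b c : A, circ a (circ b c) = circ (nsAst circ vee a b) c) ∧
  (∀ a b c : A, nsAst circ vee a (nsAst circ vee b c)
      = nsAst circ vee (nsAst circ vee a b) c) ∧
  (∀ a b : A, wedge a b = - wedge b a) ∧
  (∀ a b c : A, cdot (nsStar cdot wedge a b) c = cdot a (cdot b c) - cdot b (cdot a c)) ∧
  (∀ a b c : A, nsStar cdot wedge (nsStar cdot wedge a b) c
      + nsStar cdot wedge (nsStar cdot wedge b c) a
      + nsStar cdot wedge (nsStar cdot wedge c a) b = 0) ∧
  (∀ a b c : A, nsStar cdot wedge (nsAst circ vee a b) c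
      = nsAst circ vee a (nsStar cdot wedge b c)
        + nsAst circ vee b (nsStar cdot wedge a c)) ∧
  (∀ a b c : A, cdot (nsAst circ vee a b) c
      = circ a (cdot b c) + circ b (cdot a c)) ∧
  (∀ a b c : A, circ (nsStar cdot wedge a b) c
      = circ a (cdot b c) - cdot b (circ a c))

/-- a Poisson algebra `(A,⊥,[,])` with a Nijenhuis operator `N`
becomes an NS-Poisson algebra via `a∘b = N(a)⊥b`, `a∨b = -N(a⊥b)`,
`a·b = [N(a),b]`, `a∧b = -N([a,b])`. -/
theorem stmt_15 (perp br : A →ₗ[F] A →ₗ[F] A)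
    (hcomm : ∀ a b : A, perp a b = perp b a)
    (hassoc : ∀ a b c : A, perp (perp a b) c = perp a (perp b c))
    (hanti : ∀ a b : A, br a b = - br b a)
    (hjac : ∀ a b c : A, br (br a b) c + br (br b c) a + br (br c a) b = 0)
    (hleib : ∀ a b c : A, br a (perp b c) = perp (br a b) c + perp b (br a c))
    (N : A →ₗ[F] A)
    (hNperp : ∀ x y : A, perp (N x) (N y)
      = N (perp (N x) y + perp x (N y) - N (perp x y)))
    (hNbr : ∀ x y : A, br (N x) (N y)
      = N (br (N x) y + br x (N y) - N (br x y))) :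
    IsNSPoisson (br ∘ₗ N) (-(br.compr₂ N)) (perp ∘ₗ N) (-(perp.compr₂ N)) := by
  have hast : ∀ a b : A, nsAst (perp ∘ₗ N) (-(perp.compr₂ N)) a b
      = perp (N a) b + perp a (N b) - N (perp a b) := by
    intro a b
    simp only [nsAst, LinearMap.comp_apply, LinearMap.neg_apply, LinearMap.compr₂_apply]
    rw [hcomm (N b) a]; abel
  have hNast : ∀ a b : A, N (nsAst (perp ∘ₗ N) (-(perp.compr₂ N)) a b)
      = perp (N a) (N b) := by
    intro a b; rw [hast]; exact (hNperp a b).symm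
  have hstar : ∀ a b : A, nsStar (br ∘ₗ N) (-(br.compr₂ N)) a b
      = br (N a) b + br a (N b) - N (br a b) := by
    intro a b
    simp only [nsStar, LinearMap.comp_apply, LinearMap.neg_apply, LinearMap.compr₂_apply]
    rw [hanti (N b) a]; abel
  have hNstar : ∀ a b : A, N (nsStar (br ∘ₗ N) (-(br.compr₂ N)) a b)
      = br (N a) (N b) := by
    intro a b; rw [hstar]; exact (hNbr a b).symm
  have hleib' : ∀ x y z : A, br (perp x y) z = perp (br x z) y + perp x (br y z) := by
    intro x y z
    rw [hanti (perp x y) z, hleib z x y, hanti z x, hanti z y]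
    simp only [map_neg, LinearMap.neg_apply]
    abel
  refine ⟨?_, ?_, ?_, ?_, ?_, ?_, ?_, ?_, ?_⟩
  · -- vee commutative
    intro a b
    simp only [LinearMap.neg_apply, LinearMap.compr₂_apply]
    rw [hcomm a b]
  · -- circ identity
    intro a b c
    simp only [LinearMap.comp_apply]
    rw [hNast a b, hassoc]
  · -- nsAst associative
    intro a b c
    rw [hast a (nsAst _ _ b c), hast (nsAst _ _ a b) c, hNast b c, hNast a b,
        hast a b, hast b c]
    simp only [map_add, map_sub, LinearMap.add_apply, LinearMap.sub_apply]
    rw [hNperp a (perp b c), hNperp (perp a b) c]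
    simp only [map_add, map_sub]
    simp only [hassoc]
    abel
  · -- wedge anticommutative
    intro a b
    simp only [LinearMap.neg_apply, LinearMap.compr₂_apply]
    rw [hanti a b]
    simp [map_neg]
  · -- cdot derived-bracket Leibniz
    intro a b c
    simp only [LinearMap.comp_apply]
    rw [hNstar a b]
    have h1 : br (br (N b) c) (N a) = -(br (N a) (br (N b) c)) := hanti _ _
    have h2 : br (br c (N a)) (N b) = br (N b) (br (N a) c) := by
      rw [hanti c (N a), map_neg, LinearMap.neg_apply, hanti (br (N a) c) (N b), neg_neg]
    linear_combination (norm := abel) hjac (N a) (N b) c - h1 - h2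
  · -- nsStar Jacobi
    intro a b c
    rw [hstar (nsStar _ _ a b) c, hstar (nsStar _ _ b c) a, hstar (nsStar _ _ c a) b,
        hNstar a b, hNstar b c, hNstar c a, hstar a b, hstar b c, hstar c a]
    simp only [map_add, map_sub, LinearMap.add_apply, LinearMap.sub_apply]
    rw [hNbr (br a b) c, hNbr (br b c) a, hNbr (br c a) b]
    simp only [map_add, map_sub]
    have hj : ∀ x y z : A, N (br (br x y) z) + N (br (br y z) x) + N (br (br z x) y) = 0 := by
      intro x y z
      simpa only [map_add, map_zero] using congrArg N (hjac x y z)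
    have hjj : ∀ x y z : A,
        N (N (br (br x y) z)) + N (N (br (br y z) x)) + N (N (br (br z x) y)) = 0 := by
      intro x y z
      simpa only [map_add, map_zero] using congrArg N (hj x y z)
    linear_combination (norm := abel) hjac (N a) (N b) c + hjac (N a) b (N c)
      + hjac a (N b) (N c) - hj (N a) b c - hj a (N b) c - hj a b (N c) + hjj a b c
  · -- star-ast compatibility
    intro a b c
    rw [hstar (nsAst _ _ a b) c, hNast a b, hast a (nsStar _ _ b c),
        hast b (nsStar _ _ a c), hNstar b c, hNstar a c, hast a b, hstar b c, hstar a c]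
    simp only [map_add, map_sub, LinearMap.add_apply, LinearMap.sub_apply]
    rw [hNbr (perp a b) c, hNperp a (br b c), hNperp b (br a c)]
    simp only [map_add, map_sub]
    simp only [hleib', map_add, map_sub]
    simp only [hcomm]
    abel
  · -- cdot-ast compatibility
    intro a b c
    simp only [LinearMap.comp_apply]
    rw [hNast a b, hleib' (N a) (N b) c, hcomm (br (N a) c) (N b)]
    abel
  · -- circ-star compatibility
    intro a b c
    simp only [LinearMap.comp_apply]
    rw [hNstar a b, hanti (N a) (N b), map_neg, LinearMap.neg_apply, hleib (N b) (N a) c]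
    abel
end

section
/- Let (A,[,]) be a Lie algebra with a Nijenhuis operator N ([N(x),N(y)] = N([N(x),y] + [x,N(y)] - N([x,y]))). Define a·b = [N(a),b] and a∧b = -N([a,b]). Then (A,·,∧) is an NS-Lie algebra: ∧ is anticommutative and, with a⋆b = a·b - b·a + a∧b, the identities (a⋆b)·c = a·(b·c) - b·(a·c) and (a⋆b)⋆c + (b⋆c)⋆a + (c⋆a)⋆b = 0 hold. -/
variable {F : Type*} [Field F] {A : Type*} [AddCommGroup A] [Module F A]

/-- a Lie algebra `(A,[,])` with a Nijenhuis operator `N` becomes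
an NS-Lie algebra via `a·b = [N(a),b]`, `a∧b = -N([a,b])`: `∧` is anticommutative
and, with `a⋆b = a·b - b·a + a∧b`, `(a⋆b)·c = a·(b·c) - b·(a·c)` and
`(a⋆b)⋆c + (b⋆c)⋆a + (c⋆a)⋆b = 0`. -/
theorem stmt_17 (br : A →ₗ[F] A →ₗ[F] A)
    (hanti : ∀ a b : A, br a b = - br b a)
    (hjac : ∀ a b c : A, br (br a b) c + br (br b c) a + br (br c a) b = 0)
    (N : A →ₗ[F] A)
    (hN : ∀ x y : A, br (N x) (N y)
      = N (br (N x) y + br x (N y) - N (br x y))) :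
    (∀ a b : A, (-(br.compr₂ N)) a b = - (-(br.compr₂ N)) b a) ∧
    (∀ a b c : A,
      (br ∘ₗ N) (nsStar (br ∘ₗ N) (-(br.compr₂ N)) a b) c
        = (br ∘ₗ N) a ((br ∘ₗ N) b c) - (br ∘ₗ N) b ((br ∘ₗ N) a c)) ∧
    (∀ a b c : A,
      nsStar (br ∘ₗ N) (-(br.compr₂ N)) (nsStar (br ∘ₗ N) (-(br.compr₂ N)) a b) c
      + nsStar (br ∘ₗ N) (-(br.compr₂ N)) (nsStar (br ∘ₗ N) (-(br.compr₂ N)) b c) a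
      + nsStar (br ∘ₗ N) (-(br.compr₂ N)) (nsStar (br ∘ₗ N) (-(br.compr₂ N)) c a) b
        = 0) := by
  refine ⟨?_, ?_, ?_⟩
  · intro a b
    simp only [LinearMap.neg_apply, LinearMap.compr₂_apply, neg_neg]
    rw [hanti a b]
    simp
  · intro a b c
    simp only [nsStar, LinearMap.comp_apply, LinearMap.neg_apply, LinearMap.compr₂_apply,
      map_add, map_sub, map_neg, LinearMap.add_apply, LinearMap.sub_apply]
    linear_combination (norm :=
        (simp only [map_add, map_sub, map_neg, map_zero, LinearMap.add_apply,
          LinearMap.sub_apply, LinearMap.neg_apply, LinearMap.zero_apply]; abel))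
      (-(congrArg (fun u => br u c) (hN a b)))
      + hjac (N a) (N b) c
      - congrArg (fun u => br (N u) c) (hanti a (N b))
      + congrArg (fun u => br (N b) u) (hanti c (N a))
      - hanti (br c (N a)) (N b)
      - congrArg (fun u => br u (N a)) (hanti c (N b))
      - congrArg (fun u => br (N a) u) (hanti c (N b))
      + hanti (br c (N b)) (N a)
  · intro a b c
    simp only [nsStar, LinearMap.comp_apply, LinearMap.neg_apply, LinearMap.compr₂_apply,
      map_add, map_sub, map_neg, LinearMap.add_apply, LinearMap.sub_apply]
    linear_combination (norm :=
        (simp only [map_add, map_sub, map_neg, map_zero, LinearMap.add_apply,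
          LinearMap.sub_apply, LinearMap.neg_apply, LinearMap.zero_apply]; abel))
      (-(congrArg (fun u => br u c) (hN a b)))
      - hN (br a b) c
      - congrArg (fun u => br u a) (hN b c)
      - hN (br b c) a
      - congrArg (fun u => br u b) (hN c a)
      - hN (br c a) b
      + congrArg N (congrArg N (hjac a b c))
      - congrArg N (hjac a b (N c))
      - congrArg N (hjac b c (N a))
      - congrArg N (hjac c a (N b))
      + hjac a (N b) (N c)
      + hjac b (N c) (N a)
      + hjac c (N a) (N b)
      + congrArg (fun u => N (br u c)) (hanti a (N b))
      + congrArg (fun u => br (N c) u) (hanti a (N b))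
      - congrArg (fun u => br u (N b)) (hanti a (N c))
      - congrArg (fun u => br (N b) u) (hanti a (N c))
      - congrArg (fun u => br u (N c)) (hanti b (N a))
      - congrArg (fun u => br (N c) u) (hanti b (N a))
      + congrArg (fun u => N (br u a)) (hanti b (N c))
      + congrArg (fun u => br (N a) u) (hanti b (N c))
      + congrArg (fun u => N (br u b)) (hanti c (N a))
      + congrArg (fun u => br (N b) u) (hanti c (N a))
      - congrArg (fun u => br u (N a)) (hanti c (N b))
      - congrArg (fun u => br (N a) u) (hanti c (N b))
      + hanti (N a) (N (br b c))
      + hanti (N b) (N (br c a))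
      + hanti (N c) (N (br a b))
      - congrArg (fun u => br (N u) c) (hanti a (N b))
      - congrArg (fun u => br (N u) a) (hanti b (N c))
      - congrArg (fun u => br (N u) b) (hanti c (N a))
      - hanti (N c) (br a (N b))
      + hanti (N b) (br a (N c))
      + hanti (N c) (br b (N a))
      - hanti (N a) (br b (N c))
      - hanti (N b) (br c (N a))
      + hanti (N a) (br c (N b))
end
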